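/- arXiv:2508.07591 — 2 statements merged into one kernel-verified Lean document; each statement's English description precedes it below -/
import Mathlib

section
/- Let T be a self-adjoint operator on a finite-dimensional real inner product space V of dimension N, with eigenvalues μ_1 ≤ ⋯ ≤ μ_N (with multiplicity). Suppose all μ_j are nonzero, and denote by λ_k the k-th smallest positive eigenvalue (assuming at least k positive eigenvalues exist). Then 1/λ_k = inf over (k−1)-dimensional subspaces W of V of sup over nonzero v ⟂ W of ⟨v, T v⟩ / ⟨T v, T v⟩. -/
/-!
Write `c i = ⟪b i, v⟫` in the orthonormal eigenbasis, so that `⟪v, T v⟫ / ⟪T v, T v⟫` equals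
`(∑ μ i * c i ^ 2) / (∑ μ i ^ 2 * c i ^ 2)`, and let `F` be the set of indices of the positive
eigenvalues before `λ = μ j`. On `(span (b '' F))ᗮ` every `i` with `c i ≠ 0` has `μ i ≤ 0` or
`λ ≤ μ i`, so `λ * μ i ≤ μ i ^ 2` termwise and the quotient is at most `1 / λ`, with equality at
`b j`. Conversely, any `W` of dimension `k - 1` has a nonzero vector of the `k`-dimensional
`span (b '' insert j F)` in its orthogonal complement, and there `0 < μ i ≤ λ` whenever `c i ≠ 0`,
so the quotient is at least `1 / λ`.
-/

open scoped RealInnerProductSpace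

open Module Submodule

theorem Submodule.exists_mem_orthogonal_ne_zero_of_finrank_lt {𝕜 E : Type*} [RCLike 𝕜]
    [NormedAddCommGroup E] [InnerProductSpace 𝕜 E] [FiniteDimensional 𝕜 E]
    {U W : Submodule 𝕜 E} (h : finrank 𝕜 W < finrank 𝕜 U) :
    ∃ v ∈ U, v ∈ Wᗮ ∧ v ≠ 0 := by
  by_contra! hUW
  have := finrank_add_finrank_le_of_disjoint (disjoint_def.mpr hUW)
  have := W.finrank_add_finrank_orthogonal
  omega

theorem exists_forall_le_sq_mul {ι : Type*} [Fintype ι] (x : ι → ℝ) :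
    ∃ C, 0 ≤ C ∧ ∀ i, x i ≤ x i ^ 2 * C := by
  refine ⟨∑ i, |x i|⁻¹, by positivity, fun i => ?_⟩
  calc x i ≤ |x i| := le_abs_self _
    _ = x i ^ 2 * |x i|⁻¹ := by
        rw [← sq_abs, sq, mul_assoc]
        rcases eq_or_ne (x i) 0 with h | h
        · simp [h]
        · rw [mul_inv_cancel₀ (abs_ne_zero.mpr h), mul_one]
    _ ≤ x i ^ 2 * ∑ i, |x i|⁻¹ := by
        gcongr
        exact Finset.single_le_sum (f := fun i => |x i|⁻¹) (fun i _ => by positivity)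
          (Finset.mem_univ i)

namespace OrthonormalBasis

variable {ι V : Type*} [Fintype ι] [NormedAddCommGroup V] [InnerProductSpace ℝ V]
  (b : OrthonormalBasis ι ℝ V)

theorem finrank_span_image (s : Set ι) : finrank ℝ (span ℝ (b '' s)) = s.ncard := by
  classical
  rw [Set.image_eq_range,
    finrank_span_eq_card (b := fun i : s => b i)
      (b.orthonormal.linearIndependent.comp _ Subtype.val_injective)]
  simp [Set.ncard_eq_toFinset_card']

theorem inner_eq_zero_of_mem_span_image {s : Set ι} {v : V} (hv : v ∈ span ℝ (b '' s))
    {i : ι} (hi : i ∉ s) : ⟪b i, v⟫ = 0 := by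
  induction hv using Submodule.span_induction with
  | mem x hx =>
    obtain ⟨l, hl, rfl⟩ := hx
    exact b.inner_eq_zero (ne_of_mem_of_not_mem hl hi).symm
  | zero => exact inner_zero_right _
  | add x y _ _ hx hy => rw [inner_add_right, hx, hy, add_zero]
  | smul a x _ hx => rw [real_inner_smul_right, hx, mul_zero]

theorem exists_inner_ne_zero {v : V} (hv : v ≠ 0) : ∃ i, ⟪b i, v⟫ ≠ 0 := by
  by_contra! h
  exact hv (b.repr.map_eq_zero_iff.mp (by ext i; simp [b.repr_apply_apply, h]))

end OrthonormalBasis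

section Eigenbasis

variable {ι V : Type*} [Fintype ι] [NormedAddCommGroup V] [InnerProductSpace ℝ V]
  {T : V →ₗ[ℝ] V} {μ : ι → ℝ} {b : OrthonormalBasis ι ℝ V}

theorem inner_apply_eq_mul_inner (hT : T.IsSymmetric) (heig : ∀ i, T (b i) = μ i • b i)
    (i : ι) (v : V) : ⟪b i, T v⟫ = μ i * ⟪b i, v⟫ := by
  rw [← hT, heig, real_inner_smul_left]

theorem inner_apply_self_eq_sum (hT : T.IsSymmetric) (heig : ∀ i, T (b i) = μ i • b i)
    (v : V) : ⟪v, T v⟫ = ∑ i, μ i * ⟪b i, v⟫ ^ 2 := by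
  rw [← b.sum_inner_mul_inner]
  refine Finset.sum_congr rfl fun i _ => ?_
  rw [inner_apply_eq_mul_inner hT heig, real_inner_comm]
  ring

theorem inner_apply_apply_eq_sum (hT : T.IsSymmetric) (heig : ∀ i, T (b i) = μ i • b i)
    (v : V) : ⟪T v, T v⟫ = ∑ i, μ i ^ 2 * ⟪b i, v⟫ ^ 2 := by
  rw [← b.sum_inner_mul_inner]
  refine Finset.sum_congr rfl fun i _ => ?_
  rw [real_inner_comm, inner_apply_eq_mul_inner hT heig]
  ring

theorem bddAbove_range_inner_div (hT : T.IsSymmetric) (heig : ∀ i, T (b i) = μ i • b i) :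
    BddAbove (Set.range fun v => ⟪v, T v⟫ / ⟪T v, T v⟫) := by
  obtain ⟨C, hC0, hC⟩ := exists_forall_le_sq_mul μ
  refine ⟨C, ?_⟩
  rintro _ ⟨v, rfl⟩
  refine div_le_of_le_mul₀ real_inner_self_nonneg hC0 ?_
  rw [inner_apply_self_eq_sum hT heig, inner_apply_apply_eq_sum hT heig, Finset.mul_sum]
  refine Finset.sum_le_sum fun i _ => ?_
  nlinarith [hC i, sq_nonneg ⟪b i, v⟫]

theorem inner_div_le_one_div (hT : T.IsSymmetric) (heig : ∀ i, T (b i) = μ i • b i)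
    {m : ℝ} (hm : 0 < m) {v : V} (hv : ∀ i, ⟪b i, v⟫ ≠ 0 → μ i ≤ 0 ∨ m ≤ μ i) :
    ⟪v, T v⟫ / ⟪T v, T v⟫ ≤ 1 / m := by
  refine div_le_of_le_mul₀ real_inner_self_nonneg (by positivity) ?_
  rw [inner_apply_self_eq_sum hT heig, inner_apply_apply_eq_sum hT heig, Finset.mul_sum]
  refine Finset.sum_le_sum fun i _ => ?_
  rcases eq_or_ne ⟪b i, v⟫ 0 with h | h
  · simp [h]
  · have key : m * μ i ≤ μ i ^ 2 := by rcases hv i h with hμ | hμ <;> nlinarith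
    rw [one_div, le_inv_mul_iff₀ hm, ← mul_assoc]
    exact mul_le_mul_of_nonneg_right key (sq_nonneg _)

theorem one_div_le_inner_div (hT : T.IsSymmetric) (heig : ∀ i, T (b i) = μ i • b i)
    {m : ℝ} {v : V} (hv0 : v ≠ 0) (hv : ∀ i, ⟪b i, v⟫ ≠ 0 → 0 < μ i ∧ μ i ≤ m) :
    1 / m ≤ ⟪v, T v⟫ / ⟪T v, T v⟫ := by
  obtain ⟨i₀, hi₀⟩ := b.exists_inner_ne_zero hv0
  have hm : 0 < m := (hv i₀ hi₀).1.trans_le (hv i₀ hi₀).2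
  have hTv : 0 < ⟪T v, T v⟫ := by
    rw [inner_apply_apply_eq_sum hT heig]
    exact Finset.sum_pos' (fun i _ => by positivity)
      ⟨i₀, Finset.mem_univ _, by have := (hv i₀ hi₀).1; positivity⟩
  rw [div_le_div_iff₀ hm hTv, one_mul, inner_apply_self_eq_sum hT heig,
    inner_apply_apply_eq_sum hT heig, Finset.sum_mul]
  refine Finset.sum_le_sum fun i _ => ?_
  rcases eq_or_ne ⟪b i, v⟫ 0 with h | h
  · simp [h]
  · obtain ⟨hμ0, hμm⟩ := hv i h
    have key : μ i ^ 2 ≤ μ i * m := by nlinarith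
    nlinarith [mul_le_mul_of_nonneg_right key (sq_nonneg ⟪b i, v⟫)]

end Eigenbasis

noncomputable def dualRayleighSup {V : Type*} [NormedAddCommGroup V] [InnerProductSpace ℝ V]
    (T : V →ₗ[ℝ] V) (W : Submodule ℝ V) : ℝ :=
  sSup {r : ℝ | ∃ v : V, v ≠ 0 ∧ v ∈ Wᗮ ∧ r = ⟪v, T v⟫ / ⟪T v, T v⟫}

section DualRayleighSup

variable {ι V : Type*} [Fintype ι] [NormedAddCommGroup V] [InnerProductSpace ℝ V]
  {T : V →ₗ[ℝ] V} {μ : ι → ℝ} {b : OrthonormalBasis ι ℝ V}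

theorem inner_div_le_dualRayleighSup (hT : T.IsSymmetric) (heig : ∀ i, T (b i) = μ i • b i)
    {W : Submodule ℝ V} {v : V} (hv0 : v ≠ 0) (hvW : v ∈ Wᗮ) :
    ⟪v, T v⟫ / ⟪T v, T v⟫ ≤ dualRayleighSup T W := by
  refine le_csSup ((bddAbove_range_inner_div hT heig).mono ?_) ⟨v, hv0, hvW, rfl⟩
  rintro _ ⟨v, -, -, rfl⟩
  exact ⟨v, rfl⟩

theorem one_div_le_dualRayleighSup [FiniteDimensional ℝ V] (hT : T.IsSymmetric)
    (heig : ∀ i, T (b i) = μ i • b i) {m : ℝ} {P : Set ι} (hP : ∀ i ∈ P, 0 < μ i ∧ μ i ≤ m)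
    {W : Submodule ℝ V} (hW : finrank ℝ W < P.ncard) :
    1 / m ≤ dualRayleighSup T W := by
  rw [← b.finrank_span_image P] at hW
  obtain ⟨v, hvP, hvW, hv0⟩ := exists_mem_orthogonal_ne_zero_of_finrank_lt hW
  refine (one_div_le_inner_div hT heig hv0 fun i hi => hP i ?_).trans
    (inner_div_le_dualRayleighSup hT heig hv0 hvW)
  by_contra hiP
  exact hi (b.inner_eq_zero_of_mem_span_image hvP hiP)

theorem dualRayleighSup_span_image_eq (hT : T.IsSymmetric) (heig : ∀ i, T (b i) = μ i • b i)
    {s : Set ι} {j : ι} (hjs : j ∉ s) (hμj : 0 < μ j) (hs : ∀ i ∉ s, μ i ≤ 0 ∨ μ j ≤ μ i) :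
    dualRayleighSup T (span ℝ (b '' s)) = 1 / μ j := by
  have hbj : b j ∈ (span ℝ (b '' s))ᗮ :=
    (mem_orthogonal' _ _).2 fun u hu => b.inner_eq_zero_of_mem_span_image hu hjs
  apply le_antisymm
  · refine csSup_le ⟨_, b j, b.orthonormal.ne_zero j, hbj, rfl⟩ ?_
    rintro _ ⟨v, -, hv, rfl⟩
    refine inner_div_le_one_div hT heig hμj fun i hi => hs i fun his => hi ?_
    exact inner_right_of_mem_orthogonal (subset_span (Set.mem_image_of_mem b his)) hv
  · refine (one_div_le_inner_div hT heig (b.orthonormal.ne_zero j) fun i hi => ?_).trans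
      (inner_div_le_dualRayleighSup hT heig (b.orthonormal.ne_zero j) hbj)
    obtain rfl : i = j := by_contra fun hij => hi (b.inner_eq_zero hij)
    exact ⟨hμj, le_rfl⟩

end DualRayleighSup

theorem stmt_10_general {V : Type*} [NormedAddCommGroup V] [InnerProductSpace ℝ V]
    [FiniteDimensional ℝ V] {N k : ℕ}
    (T : V →ₗ[ℝ] V) (hT : T.IsSymmetric)
    (μ : Fin N → ℝ) (hmono : Monotone μ)
    (b : OrthonormalBasis (Fin N) ℝ V)
    (heig : ∀ i, T (b i) = μ i • b i)
    (j : Fin N) (hjpos : 0 < μ j)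
    (hcount : Set.ncard {i : Fin N | 0 < μ i ∧ i < j} = k - 1) :
    1 / μ j =
      sInf {s : ℝ | ∃ W : Submodule ℝ V, Module.finrank ℝ W = k - 1 ∧
        s = sSup {r : ℝ | ∃ v : V, v ≠ 0 ∧ v ∈ Wᗮ ∧
          r = ⟪v, T v⟫ / ⟪T v, T v⟫}} := by
  set F := {i : Fin N | 0 < μ i ∧ i < j}
  have hjF : j ∉ F := fun h => lt_irrefl j h.2
  have hW₀ : dualRayleighSup T (span ℝ (b '' F)) = 1 / μ j := by
    refine dualRayleighSup_span_image_eq hT heig hjF hjpos fun i hi => ?_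
    rcases le_or_gt (μ i) 0 with hμ | hμ
    · exact .inl hμ
    · exact .inr (hmono (not_lt.mp fun hij => hi ⟨hμ, hij⟩))
  symm
  refine IsLeast.csInf_eq ⟨⟨_, by rw [b.finrank_span_image, hcount], hW₀.symm⟩, ?_⟩
  rintro _ ⟨W, hW, rfl⟩
  refine one_div_le_dualRayleighSup hT heig (P := insert j F) ?_ ?_
  · rintro i (rfl | ⟨hμ, hij⟩)
    exacts [⟨hjpos, le_rfl⟩, ⟨hμ, hmono hij.le⟩]
  · rw [Set.ncard_insert_of_notMem hjF, hW, hcount]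
    omega

theorem stmt_10 {V : Type*} [NormedAddCommGroup V] [InnerProductSpace ℝ V]
    [FiniteDimensional ℝ V] {N k : ℕ} (hk : 1 ≤ k)
    (T : V →ₗ[ℝ] V) (hT : T.IsSymmetric)
    (μ : Fin N → ℝ) (hmono : Monotone μ)
    (b : OrthonormalBasis (Fin N) ℝ V)
    (heig : ∀ i, T (b i) = μ i • b i)
    (hne : ∀ i, μ i ≠ 0)
    (j : Fin N) (hjpos : 0 < μ j)
    (hcount : Set.ncard {i : Fin N | 0 < μ i ∧ i < j} = k - 1) :
    1 / μ j =
      sInf {s : ℝ | ∃ W : Submodule ℝ V, Module.finrank ℝ W = k - 1 ∧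
        s = sSup {r : ℝ | ∃ v : V, v ≠ 0 ∧ v ∈ Wᗮ ∧
          r = ⟪v, T v⟫ / ⟪T v, T v⟫}} :=
  stmt_10_general T hT μ hmono b heig j hjpos hcount
end

section
/- Let V be a finite-dimensional real inner product space, D a self-adjoint invertible operator on V, and A₁, A₂ self-adjoint positive-definite operators on V with A₁ ≥ A₂. For each k, let λ_k(A_i) denote the k-th smallest positive eigenvalue (with multiplicity) of A_i⁻¹D, characterized by 1/λ_k(A_i) = inf over k-dimensional subspaces W of sup over nonzero v ∈ W of ⟨v, D v⟩ / ⟨A_i⁻¹ D v, D v⟩. Then λ_k(A₁) ≤ λ_k(A₂) whenever both are defined. -/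
/-! Since `A₂ ≤ A₁`, the inverses satisfy `B₁ ≤ B₂`, so for every `v` with `⟪v, D v⟫ ≥ 0` the
Rayleigh-type quotient `⟪v, D v⟫ / ⟪B (D v), D v⟫` is larger for `B₁` than for `B₂`. Vectors with
`⟪v, D v⟫ < 0` give negative quotients, which cannot realise a positive supremum. Hence the
min-max value for `A₂` is at most the one for `A₁`, i.e. `1 / λ₂ ≤ 1 / λ₁`. -/

open scoped RealInnerProductSpace

section Inverse

variable {V : Type*} [NormedAddCommGroup V] [InnerProductSpace ℝ V]

lemma inner_apply_self_pos_of_comp_eq_id {A B : V →ₗ[ℝ] V}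
    (hA : ∀ v : V, v ≠ 0 → 0 < ⟪A v, v⟫) (hAB : A ∘ₗ B = LinearMap.id) {w : V} (hw : w ≠ 0) :
    0 < ⟪B w, w⟫ := by
  have hABw : A (B w) = w := LinearMap.congr_fun hAB w
  have hBw : B w ≠ 0 := fun h => hw (by rw [← hABw, h, map_zero])
  calc 0 < ⟪A (B w), B w⟫ := hA _ hBw
    _ = ⟪B w, w⟫ := by rw [hABw, real_inner_comm]

lemma inner_inverse_apply_self_le {A₁ A₂ B₁ B₂ : V →ₗ[ℝ] V} (hA₂ : A₂.IsSymmetric)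
    (hA₂_nonneg : ∀ v : V, 0 ≤ ⟪A₂ v, v⟫)
    (hB₁ : A₁ ∘ₗ B₁ = LinearMap.id) (hB₂ : A₂ ∘ₗ B₂ = LinearMap.id)
    (hle : ∀ v : V, 0 ≤ ⟪(A₁ - A₂) v, v⟫) (w : V) :
    ⟪B₁ w, w⟫ ≤ ⟪B₂ w, w⟫ := by
  set u := B₁ w
  set u' := B₂ w
  have h₁ : A₁ u = w := LinearMap.congr_fun hB₁ w
  have h₂ : A₂ u' = w := LinearMap.congr_fun hB₂ w
  -- expand `0 ≤ ⟪A₂ (u - u'), u - u'⟫` and bound `⟪A₂ u, u⟫` by `⟪A₁ u, u⟫ = ⟪w, u⟫`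
  have hdiff := hA₂_nonneg (u - u')
  have hcmp := hle u
  rw [map_sub, inner_sub_left, inner_sub_right, inner_sub_right, hA₂ u u', h₂] at hdiff
  rw [LinearMap.sub_apply, inner_sub_left, h₁] at hcmp
  rw [real_inner_comm u' w, real_inner_comm u w] at *
  linarith

end Inverse

section Quotient

variable {E : Type*} [NormedAddCommGroup E] [NormedSpace ℝ E] [ProperSpace E]

lemma bddAbove_image_compl_zero_of_smul_invariant {h : E → ℝ} (hcont : ContinuousOn h {0}ᶜ)
    (hsmul : ∀ (c : ℝ) (v : E), 0 < c → h (c • v) = h v) :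
    BddAbove (h '' {0}ᶜ) := by
  have hsphere : Metric.sphere (0 : E) 1 ⊆ {0}ᶜ := fun v hv h0 => by
    simp [Set.mem_singleton_iff.mp h0] at hv
  refine ((isCompact_sphere 0 1).bddAbove_image (hcont.mono hsphere)).mono ?_
  rintro _ ⟨v, hv, rfl⟩
  have hnorm : 0 < ‖v‖ := norm_pos_iff.mpr hv
  refine ⟨‖v‖⁻¹ • v, ?_, hsmul _ v (inv_pos.mpr hnorm)⟩
  rw [mem_sphere_zero_iff_norm, norm_smul, norm_inv, norm_norm, inv_mul_cancel₀ hnorm.ne']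

end Quotient

lemma bddAbove_inner_div_inner {V : Type*} [NormedAddCommGroup V] [InnerProductSpace ℝ V]
    [FiniteDimensional ℝ V] {D B : V →ₗ[ℝ] V} (hpos : ∀ v : V, v ≠ 0 → 0 < ⟪B (D v), D v⟫) :
    BddAbove ((fun v => ⟪v, D v⟫ / ⟪B (D v), D v⟫) '' {0}ᶜ) := by
  have hD := D.continuous_of_finiteDimensional
  have hB := B.continuous_of_finiteDimensional
  refine bddAbove_image_compl_zero_of_smul_invariant ?_ fun c v hc => ?_
  · exact (continuous_id.inner hD).continuousOn.div ((hB.comp hD).inner hD).continuousOn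
      fun v hv => (hpos v hv).ne'
  · simp only [map_smul, real_inner_smul_left, real_inner_smul_right, ← mul_assoc]
    exact mul_div_mul_left _ _ (by positivity)

section MinMax

variable {V : Type*} [AddCommGroup V] [Module ℝ V]

noncomputable def nonzeroSup (f : V → ℝ) (W : Submodule ℝ V) : ℝ :=
  sSup {r : ℝ | ∃ v : V, v ≠ 0 ∧ v ∈ W ∧ r = f v}

lemma nonzeroSup_le_nonzeroSup {f₁ f₂ : V → ℝ} (W : Submodule ℝ V)
    (hf : ∀ v : V, v ≠ 0 → 0 < f₂ v → f₂ v ≤ f₁ v) (hbdd : BddAbove (f₁ '' {0}ᶜ))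
    (hpos : 0 < nonzeroSup f₂ W) :
    nonzeroSup f₂ W ≤ nonzeroSup f₁ W := by
  unfold nonzeroSup at *
  have hbdd₁ : BddAbove {r : ℝ | ∃ v : V, v ≠ 0 ∧ v ∈ W ∧ r = f₁ v} :=
    by
    refine hbdd.mono ?_
    rintro _ ⟨v, hv, -, rfl⟩
    exact ⟨v, hv, rfl⟩
  have hne : {r : ℝ | ∃ v : V, v ≠ 0 ∧ v ∈ W ∧ r = f₂ v}.Nonempty := by
    by_contra h
    rw [Set.not_nonempty_iff_eq_empty] at h
    simp [h] at hpos
  obtain ⟨_, ⟨v₀, hv₀, hv₀W, rfl⟩, hf₂v₀⟩ := exists_lt_of_lt_csSup hne hpos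
  have hsup₁ : 0 < sSup {r : ℝ | ∃ v : V, v ≠ 0 ∧ v ∈ W ∧ r = f₁ v} :=
    hf₂v₀.trans_le ((hf v₀ hv₀ hf₂v₀).trans (le_csSup hbdd₁ ⟨v₀, hv₀, hv₀W, rfl⟩))
  refine csSup_le hne ?_
  rintro _ ⟨v, hv, hvW, rfl⟩
  rcases le_or_gt (f₂ v) 0 with hneg | hf₂v
  · exact hneg.trans hsup₁.le
  · exact (hf v hv hf₂v).trans (le_csSup hbdd₁ ⟨v, hv, hvW, rfl⟩)

end MinMax

lemma sInf_le_sInf_of_pos {ι : Type*} {P : ι → Prop} {g₁ g₂ : ι → ℝ}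
    (hg : ∀ i, P i → 0 < g₂ i → g₂ i ≤ g₁ i) (hpos : 0 < sInf {s : ℝ | ∃ i, P i ∧ s = g₂ i}) :
    sInf {s : ℝ | ∃ i, P i ∧ s = g₂ i} ≤ sInf {s : ℝ | ∃ i, P i ∧ s = g₁ i} := by
  have hbdd : BddBelow {s : ℝ | ∃ i, P i ∧ s = g₂ i} := by
    by_contra h
    rw [Real.sInf_of_not_bddBelow h] at hpos
    exact hpos.false
  obtain ⟨_, i₀, hi₀, -⟩ : {s : ℝ | ∃ i, P i ∧ s = g₂ i}.Nonempty := by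
    by_contra h
    rw [Set.not_nonempty_iff_eq_empty] at h
    simp [h] at hpos
  refine le_csInf ⟨g₁ i₀, i₀, hi₀, rfl⟩ ?_
  rintro _ ⟨i, hi, rfl⟩
  have hle : sInf {s : ℝ | ∃ i, P i ∧ s = g₂ i} ≤ g₂ i := csInf_le hbdd ⟨i, hi, rfl⟩
  exact hle.trans (hg i hi (hpos.trans_le hle))

theorem stmt_12_general {V : Type*} [NormedAddCommGroup V] [InnerProductSpace ℝ V]
    [FiniteDimensional ℝ V] (k : ℕ)
    (D : V →ₗ[ℝ] V)
    (hDinv : Function.Bijective D)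
    (A₁ A₂ B₁ B₂ : V →ₗ[ℝ] V)
    (hA₂ : A₂.IsSymmetric)
    (hA₁pos : ∀ v : V, v ≠ 0 → 0 < ⟪A₁ v, v⟫)
    (hA₂pos : ∀ v : V, v ≠ 0 → 0 < ⟪A₂ v, v⟫)
    (hB₁ : A₁ ∘ₗ B₁ = LinearMap.id ∧ B₁ ∘ₗ A₁ = LinearMap.id)
    (hB₂ : A₂ ∘ₗ B₂ = LinearMap.id ∧ B₂ ∘ₗ A₂ = LinearMap.id)
    (hle : ∀ v : V, 0 ≤ ⟪(A₁ - A₂) v, v⟫)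
    (lam₁ lam₂ : ℝ) (hlam₂ : 0 < lam₂)
    (hchar₁ : 1 / lam₁ =
      sInf {s : ℝ | ∃ W : Submodule ℝ V, Module.finrank ℝ W = k ∧
        s = sSup {r : ℝ | ∃ v : V, v ≠ 0 ∧ v ∈ W ∧
          r = ⟪v, D v⟫ / ⟪B₁ (D v), D v⟫}})
    (hchar₂ : 1 / lam₂ =
      sInf {s : ℝ | ∃ W : Submodule ℝ V, Module.finrank ℝ W = k ∧
        s = sSup {r : ℝ | ∃ v : V, v ≠ 0 ∧ v ∈ W ∧
          r = ⟪v, D v⟫ / ⟪B₂ (D v), D v⟫}}) :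
    lam₁ ≤ lam₂ := by
  have hB₁pos (v : V) (hv : v ≠ 0) : 0 < ⟪B₁ (D v), D v⟫ :=
    inner_apply_self_pos_of_comp_eq_id hA₁pos hB₁.1 (by simpa using hDinv.injective.ne hv)
  have hB₂pos (v : V) (hv : v ≠ 0) : 0 < ⟪B₂ (D v), D v⟫ :=
    inner_apply_self_pos_of_comp_eq_id hA₂pos hB₂.1 (by simpa using hDinv.injective.ne hv)
  have hB_le (w : V) : ⟪B₁ w, w⟫ ≤ ⟪B₂ w, w⟫ :=
    inner_inverse_apply_self_le hA₂ (fun v => by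
      rcases eq_or_ne v 0 with rfl | hv
      · simp
      · exact (hA₂pos v hv).le) hB₁.1 hB₂.1 hle w
  have hquot (v : V) (hv : v ≠ 0) (hpos : 0 < ⟪v, D v⟫ / ⟪B₂ (D v), D v⟫) :
      ⟪v, D v⟫ / ⟪B₂ (D v), D v⟫ ≤ ⟪v, D v⟫ / ⟪B₁ (D v), D v⟫ :=
    div_le_div_of_nonneg_left ((div_pos_iff_of_pos_right (hB₂pos v hv)).mp hpos).le
      (hB₁pos v hv) (hB_le (D v))
  have hinv : 1 / lam₂ ≤ 1 / lam₁ := by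
    rw [hchar₁, hchar₂]
    refine sInf_le_sInf_of_pos (fun W _ hW => nonzeroSup_le_nonzeroSup W hquot
      (bddAbove_inner_div_inner hB₁pos) hW) ?_
    rw [← hchar₂]
    positivity
  exact le_of_one_div_le_one_div hlam₂ hinv

theorem stmt_12 {V : Type*} [NormedAddCommGroup V] [InnerProductSpace ℝ V]
    [FiniteDimensional ℝ V] (k : ℕ)
    (D : V →ₗ[ℝ] V) (hD : D.IsSymmetric)
    (hDinv : Function.Bijective D)
    (A₁ A₂ B₁ B₂ : V →ₗ[ℝ] V)
    (hA₁ : A₁.IsSymmetric) (hA₂ : A₂.IsSymmetric)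
    (hA₁pos : ∀ v : V, v ≠ 0 → 0 < ⟪A₁ v, v⟫)
    (hA₂pos : ∀ v : V, v ≠ 0 → 0 < ⟪A₂ v, v⟫)
    (hB₁ : A₁ ∘ₗ B₁ = LinearMap.id ∧ B₁ ∘ₗ A₁ = LinearMap.id)
    (hB₂ : A₂ ∘ₗ B₂ = LinearMap.id ∧ B₂ ∘ₗ A₂ = LinearMap.id)
    (hle : ∀ v : V, 0 ≤ ⟪(A₁ - A₂) v, v⟫)
    (lam₁ lam₂ : ℝ) (hlam₁ : 0 < lam₁) (hlam₂ : 0 < lam₂)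
    (hchar₁ : 1 / lam₁ =
      sInf {s : ℝ | ∃ W : Submodule ℝ V, Module.finrank ℝ W = k ∧
        s = sSup {r : ℝ | ∃ v : V, v ≠ 0 ∧ v ∈ W ∧
          r = ⟪v, D v⟫ / ⟪B₁ (D v), D v⟫}})
    (hchar₂ : 1 / lam₂ =
      sInf {s : ℝ | ∃ W : Submodule ℝ V, Module.finrank ℝ W = k ∧
        s = sSup {r : ℝ | ∃ v : V, v ≠ 0 ∧ v ∈ W ∧
          r = ⟪v, D v⟫ / ⟪B₂ (D v), D v⟫}}) :
    lam₁ ≤ lam₂ :=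
  stmt_12_general k D hDinv A₁ A₂ B₁ B₂ hA₂ hA₁pos hA₂pos hB₁ hB₂ hle lam₁ lam₂ hlam₂ hchar₁ hchar₂
end
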